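/- Let D = ℤ[1/2], C ⊆ ℤ₂^r an even binary linear code, and x ∈ ℤ₂^r. Set (M_{C+x})_D = M_{C+x} ∩ V(H_D), the D-form of the M_C-module M_{C+x} over (M_C)_D. Then the bilinear form on (M_{C+x})_D is self-dual: (M_{C+x})_D^* := {u ∈ M_{C+x} : (u, (M_{C+x})_D) ⊆ D} equals (M_{C+x})_D. -/

import Mathlib

/-!  Common framework: vertex operator superalgebras over a commutative ring,
their automorphisms, (twisted) admissible modules, irreducibility, rationality. -/

noncomputable section

open scoped BigOperators

/-- Cast of a rational number into a commutative ring (meaningful whenever the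
denominator is invertible in `R`). -/
def rcast (R : Type) [CommRing R] (q : ℚ) : R :=
  (q.num : R) * Ring.inverse ((q.den : ℕ) : R)

/-- Generalized binomial coefficient `(m choose i)` for a rational `m`. -/
def qchoose (m : ℚ) (i : ℕ) : ℚ :=
  (∏ j ∈ Finset.range i, (m - (j : ℚ))) / (Nat.factorial i : ℚ)

/-- A vertex operator superalgebra structure on an `R`-module `V`.
`op u k v` is the mode `u_k v`, i.e. the coefficient of `z^{-k-1}` in `Y(u,z)v`;
`deg k` is the homogeneous subspace `V_k` of (half-integer) degree `k`. -/
structure VOSAstr (R : Type) [CommRing R] [Invertible (2 : R)]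
    (V : Type) [AddCommGroup V] [Module R V] : Type where
  op : V → ℚ → V → V
  vac : V
  conf : V
  deg : ℚ → Submodule R V
  op_add₁ : ∀ u u' k v, op (u + u') k v = op u k v + op u' k v
  op_smul₁ : ∀ (c : R) u k v, op (c • u) k v = c • op u k v
  op_add₂ : ∀ u k v v', op u k (v + v') = op u k v + op u k v'
  op_smul₂ : ∀ (c : R) u k v, op u k (c • v) = c • op u k v
  op_supp : ∀ u (k : ℚ) v, (¬ ∃ m : ℤ, k = (m : ℚ) / 2) → op u k v = 0
  deg_half : ∀ k : ℚ, deg k ≠ ⊥ → ∃ m : ℤ, k = (m : ℚ) / 2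
  deg_internal : DirectSum.IsInternal deg
  vac_deg : vac ∈ deg 0
  conf_deg : conf ∈ deg 2
  op_deg : ∀ (m n k : ℚ) (u v : V), u ∈ deg m → v ∈ deg n → op u k v ∈ deg (m + n - k - 1)
  trunc : ∀ u v, ∃ N : ℤ, ∀ k : ℚ, (N : ℚ) ≤ k → op u k v = 0
  vac_op : ∀ v k, op vac k v = if k = -1 then v else 0
  op_vac_create : ∀ v, op v (-1) vac = v
  op_vac_pos : ∀ v k, 0 ≤ k → op v k vac = 0
  lneg1_deriv : ∀ u k v, op (op conf 0 u) k v = (-(rcast R k)) • op u (k - 1) v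
  scomm : ∀ (pu pv : Bool) (u v w : V) (m k : ℚ),
    u ∈ (⨆ i : ℤ, deg ((i : ℚ) + (if pu then (1 : ℚ)/2 else 0))) →
    v ∈ (⨆ i : ℤ, deg ((i : ℚ) + (if pv then (1 : ℚ)/2 else 0))) →
    op u m (op v k w) - (if pu && pv then (-1 : ℤ) else 1) • op v k (op u m w)
      = ∑ᶠ i : ℕ, rcast R (qchoose m i) • op (op u (i : ℚ) v) (m + k - (i : ℚ)) w

namespace VOSAstr

variable {R : Type} [CommRing R] [Invertible (2 : R)]
variable {V : Type} [AddCommGroup V] [Module R V]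

/-- The mode `u_k` as a linear endomorphism. -/
def opL (W : VOSAstr R V) (u : V) (k : ℚ) : V →ₗ[R] V where
  toFun := W.op u k
  map_add' := W.op_add₂ u k
  map_smul' := fun c v => by simpa using W.op_smul₂ c u k v

/-- The even part `V_{\bar 0}` (integral degrees). -/
def even (W : VOSAstr R V) : Submodule R V := ⨆ i : ℤ, W.deg (i : ℚ)

/-- The odd part `V_{\bar 1}` (degrees in `ℤ + 1/2`). -/
def odd (W : VOSAstr R V) : Submodule R V := ⨆ i : ℤ, W.deg ((i : ℚ) + 1/2)

/-- An ideal of the vertex operator superalgebra. -/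
def IsIdeal (W : VOSAstr R V) (N : Submodule R V) : Prop :=
  ∀ u : V, ∀ k : ℚ, ∀ w ∈ N, W.op u k w ∈ N

/-- Simplicity of a vertex operator superalgebra. -/
def IsSimple (W : VOSAstr R V) : Prop :=
  (⊥ : Submodule R V) ≠ ⊤ ∧ ∀ N : Submodule R V, W.IsIdeal N → N = ⊥ ∨ N = ⊤

/-- `A` is a vertex subalgebra (a submodule containing the vacuum and closed
under all modes). -/
def IsSubalg (W : VOSAstr R V) (A : Submodule R V) : Prop :=
  W.vac ∈ A ∧ ∀ u ∈ A, ∀ k : ℚ, ∀ w ∈ A, W.op u k w ∈ A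

/-- An automorphism of a vertex operator superalgebra. -/
structure Aut (W : VOSAstr R V) : Type where
  toFun : V → V
  invFun : V → V
  left_inv : Function.LeftInverse invFun toFun
  right_inv : Function.RightInverse invFun toFun
  map_add : ∀ u v, toFun (u + v) = toFun u + toFun v
  map_smul : ∀ (c : R) v, toFun (c • v) = c • toFun v
  map_op : ∀ u k v, toFun (W.op u k v) = W.op (toFun u) k (toFun v)
  map_vac : toFun W.vac = W.vac
  map_conf : toFun W.conf = W.conf
  map_deg : ∀ (n : ℚ), ∀ v ∈ W.deg n, toFun v ∈ W.deg n

/-- The identity automorphism. -/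
def idAut (W : VOSAstr R V) : W.Aut where
  toFun := _root_.id
  invFun := _root_.id
  left_inv := fun _ => rfl
  right_inv := fun _ => rfl
  map_add := fun _ _ => rfl
  map_smul := fun _ _ => rfl
  map_op := fun _ _ _ => rfl
  map_vac := rfl
  map_conf := rfl
  map_deg := fun _ _ h => h

/-- An automorphism has order (dividing) `T`. -/
def Aut.HasOrder {W : VOSAstr R V} (g : W.Aut) (T : ℕ) : Prop :=
  0 < T ∧ ∀ v : V, g.toFun^[T] v = v

end VOSAstr

/-- An admissible `g`-twisted module structure (for the subalgebra `A` of `W`)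
on the `R`-module `M`. For `A = ⊤` this is the notion of an admissible
`g`-twisted `W`-module; `gr` is the admissible grading. -/
structure RepStr {R : Type} [CommRing R] [Invertible (2 : R)]
    {V : Type} [AddCommGroup V] [Module R V]
    (W : VOSAstr R V) (A : Submodule R V) (g : W.Aut)
    (M : Type) [AddCommGroup M] [Module R M] : Type where
  act : V → ℚ → M → M
  vacA : W.vac ∈ A
  confA : W.conf ∈ A
  act_add₁ : ∀ u u', u ∈ A → u' ∈ A → ∀ k w, act (u + u') k w = act u k w + act u' k w
  act_smul₁ : ∀ (c : R) u, u ∈ A → ∀ k w, act (c • u) k w = c • act u k w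
  act_add₂ : ∀ u, u ∈ A → ∀ k w w', act u k (w + w') = act u k w + act u k w'
  act_smul₂ : ∀ (c : R) u, u ∈ A → ∀ k w, act u k (c • w) = c • act u k w
  T : ℕ
  hT : 0 < T
  gT : ∀ v : V, g.toFun^[T] v = v
  gr : ℚ → Submodule R M
  gr_internal : DirectSum.IsInternal gr
  gr_supp : ∀ k : ℚ, gr k ≠ ⊥ → 0 ≤ k ∧ ∃ m : ℤ, k = (m : ℚ) / (2 * T)
  act_gr : ∀ (m n k : ℚ) (u : V) (w : M), u ∈ A → u ∈ W.deg m → w ∈ gr n →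
    act u k w ∈ gr (n + m - k - 1)
  trunc : ∀ u, u ∈ A → ∀ w, ∃ N : ℤ, ∀ k : ℚ, (N : ℚ) ≤ k → act u k w = 0
  vac_act : ∀ w k, act W.vac k w = if k = -1 then w else 0
  twist : ∀ u, u ∈ A → g.toFun u = u → ∀ k : ℚ, (¬ ∃ m : ℤ, k = (m : ℚ)) →
    ∀ w, act u k w = 0
  scomm : ∀ (pu pv : Bool) (u v : V) (w : M) (m k : ℚ), u ∈ A → v ∈ A →
    u ∈ (⨆ i : ℤ, W.deg ((i : ℚ) + (if pu then (1 : ℚ)/2 else 0))) →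
    v ∈ (⨆ i : ℤ, W.deg ((i : ℚ) + (if pv then (1 : ℚ)/2 else 0))) →
    act u m (act v k w) - (if pu && pv then (-1 : ℤ) else 1) • act v k (act u m w)
      = ∑ᶠ i : ℕ, rcast R (qchoose m i) • act (W.op u (i : ℚ) v) (m + k - (i : ℚ)) w

namespace RepStr

variable {R : Type} [CommRing R] [Invertible (2 : R)]
variable {V : Type} [AddCommGroup V] [Module R V]
variable {W : VOSAstr R V} {A : Submodule R V} {g : W.Aut}
variable {M : Type} [AddCommGroup M] [Module R M]

/-- A submodule invariant under the action of `A`. -/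
def InvSub (ρ : RepStr W A g M) (N : Submodule R M) : Prop :=
  ∀ u ∈ A, ∀ k : ℚ, ∀ w ∈ N, ρ.act u k w ∈ N

/-- Irreducibility of a module. -/
def Irr (ρ : RepStr W A g M) : Prop :=
  (⊥ : Submodule R M) ≠ ⊤ ∧ ∀ N : Submodule R M, ρ.InvSub N → N = ⊥ ∨ N = ⊤

/-- Complete reducibility: every invariant submodule has an invariant complement. -/
def CompletelyReducible (ρ : RepStr W A g M) : Prop :=
  ∀ N : Submodule R M, ρ.InvSub N →
    ∃ N' : Submodule R M, ρ.InvSub N' ∧ N ⊓ N' = ⊥ ∧ N ⊔ N' = ⊤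

end RepStr

/-- An isomorphism of two (twisted) modules. -/
structure RepEquiv {R : Type} [CommRing R] [Invertible (2 : R)]
    {V : Type} [AddCommGroup V] [Module R V]
    {W : VOSAstr R V} {A : Submodule R V} {g : W.Aut}
    {M₁ : Type} [AddCommGroup M₁] [Module R M₁]
    {M₂ : Type} [AddCommGroup M₂] [Module R M₂]
    (ρ₁ : RepStr W A g M₁) (ρ₂ : RepStr W A g M₂) : Type where
  e : M₁ ≃ₗ[R] M₂
  map_act : ∀ u ∈ A, ∀ (k : ℚ) (w : M₁), e (ρ₁.act u k w) = ρ₂.act u k (e w)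

/-- `g`-rationality: every admissible `g`-twisted module is completely reducible. -/
def VOSAstr.GRational {R : Type} [CommRing R] [Invertible (2 : R)]
    {V : Type} [AddCommGroup V] [Module R V] (W : VOSAstr R V) (g : W.Aut) : Prop :=
  ∀ (M : ModuleCat R) (ρ : RepStr W ⊤ g M), ρ.CompletelyReducible

/-- Rationality (`= 1`-rationality). -/
def VOSAstr.Rational {R : Type} [CommRing R] [Invertible (2 : R)]
    {V : Type} [AddCommGroup V] [Module R V] (W : VOSAstr R V) : Prop :=
  W.GRational W.idAut

end
section Frame

variable {F : Type} [Field F] [Invertible (2 : F)]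
variable {V : Type} [AddCommGroup V] [Module F V]

/-- A submodule invariant under all modes of the vector `x`. -/
def ModesInv (W : VOSAstr F V) (x : V) (N : Submodule F V) : Prop :=
  ∀ k : ℚ, ∀ u ∈ N, W.op x k u ∈ N

/-- The subspace generated from the vacuum by the modes of `x`. -/
def ModesGen (W : VOSAstr F V) (x : V) : Submodule F V :=
  sInf {N | W.vac ∈ N ∧ ModesInv W x N}

/-- `x` generates a copy of the simple Virasoro vertex operator algebra
`L(1/2,0)` of central charge `1/2`: `x` has degree `2`, its modes
`Lˣ(n) = x_{n+1}` satisfy the Virasoro relations with `c = 1/2`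
(`[L(m),L(n)] = (m-n)L(m+n) + ((m³-m)/24)δ_{m+n,0}`), and the subspace
generated from the vacuum is nonzero and simple. -/
def IsL120 (W : VOSAstr F V) (x : V) : Prop :=
  x ∈ W.deg 2 ∧
  (∀ (m n : ℤ) (v : V),
    W.op x ((m : ℚ) + 1) (W.op x ((n : ℚ) + 1) v)
      - W.op x ((n : ℚ) + 1) (W.op x ((m : ℚ) + 1) v)
      = ((m - n : ℤ) : F) • W.op x (((m + n : ℤ) : ℚ) + 1) v +
        (if m + n = 0 then ((((m ^ 3 - m) / 6 : ℤ) : F) / 4) else 0) • v) ∧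
  ModesGen W x ≠ ⊥ ∧
  (∀ N ≤ ModesGen W x, ModesInv W x N → N = ⊥ ∨ N = ModesGen W x)

/-- A Virasoro frame: `r` vectors, each generating a copy of `L(1/2,0)`, with
mutually commuting Virasoro algebras, summing to the conformal vector. -/
def IsVirasoroFrame (W : VOSAstr F V) {r : ℕ} (ω : Fin r → V) : Prop :=
  (∑ i, ω i = W.conf) ∧ (∀ i, IsL120 W (ω i)) ∧
  (∀ i j, i ≠ j → ∀ (m k : ℚ) (v : V),
    W.op (ω i) m (W.op (ω j) k v) = W.op (ω j) k (W.op (ω i) m v))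

/-- A framed vertex operator superalgebra: a simple vertex operator
superalgebra `V = ⊕_{n ≥ 0} V_n` with a Virasoro frame. -/
def IsFramedVOSA (W : VOSAstr F V) {r : ℕ} (ω : Fin r → V) : Prop :=
  W.IsSimple ∧ IsVirasoroFrame W ω ∧ (∀ k : ℚ, W.deg k ≠ ⊥ → 0 ≤ k)

/-- A framed vertex operator algebra: all degrees are nonnegative integers. -/
def IsFramedVOA (W : VOSAstr F V) {r : ℕ} (ω : Fin r → V) : Prop :=
  IsFramedVOSA W ω ∧ (∀ k : ℚ, W.deg k ≠ ⊥ → ∃ m : ℕ, k = (m : ℚ))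

/-- A submodule invariant under all the frame Virasoro algebras, i.e. a
`T_r`-submodule. -/
def FrameInv (W : VOSAstr F V) {r : ℕ} (ω : Fin r → V) (N : Submodule F V) : Prop :=
  ∀ i, ModesInv W (ω i) N

/-- The `T_r`-submodule generated by a vector. -/
def FrameGen (W : VOSAstr F V) {r : ℕ} (ω : Fin r → V) (v : V) : Submodule F V :=
  sInf {N | v ∈ N ∧ FrameInv W ω N}

/-- `N` is an irreducible `T_r`-submodule isomorphic to
`L(h_1,…,h_r) = L(1/2,h_1) ⊗ ⋯ ⊗ L(1/2,h_r)`: it is irreducible under the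
frame Virasoro algebras and generated by a joint lowest weight vector of
weights `(h_1,…,h_r)`. -/
def IsTyped (W : VOSAstr F V) {r : ℕ} (ω : Fin r → V) (h : Fin r → F)
    (N : Submodule F V) : Prop :=
  FrameInv W ω N ∧ N ≠ ⊥ ∧
  (∀ N' ≤ N, FrameInv W ω N' → N' = ⊥ ∨ N' = N) ∧
  ∃ v ∈ N, v ≠ 0 ∧ (∀ i, ∀ k : ℚ, 2 ≤ k → W.op (ω i) k v = 0) ∧
    (∀ i, W.op (ω i) 1 v = h i • v) ∧ FrameGen W ω v = N

/-- `V^d`: the sum of all irreducible `T_r`-submodules of type `(h_1,…,h_r)`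
with `h_i ∈ {0, 1/2, 1/16}` and `h_i = 1/16` iff `d_i = 1`. -/
def VdSub (W : VOSAstr F V) {r : ℕ} (ω : Fin r → V) (d : Fin r → ZMod 2) :
    Submodule F V :=
  sSup {N | ∃ h : Fin r → F, (∀ i, h i ∈ ({0, 1/2, 1/16} : Set F)) ∧
    (∀ i, (h i = 1/16 ↔ d i = 1)) ∧ IsTyped W ω h N}

/-- The `1/16`-code `D(V)` of a framed vertex operator superalgebra. -/
def DofV (W : VOSAstr F V) {r : ℕ} (ω : Fin r → V) : Set (Fin r → ZMod 2) :=
  {d | VdSub W ω d ≠ ⊥}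

/-- `V(c)`: the sum of all irreducible `T_r`-submodules of type
`(c_1/2, …, c_r/2)`. -/
def VcSub (W : VOSAstr F V) {r : ℕ} (ω : Fin r → V) (c : Fin r → ZMod 2) :
    Submodule F V :=
  sSup {N | IsTyped W ω (fun i => if c i = 1 then (1/2 : F) else 0) N}

/-- The code `C(V)` of a framed vertex operator superalgebra. -/
def CofV (W : VOSAstr F V) {r : ℕ} (ω : Fin r → V) : Set (Fin r → ZMod 2) :=
  {c | VcSub W ω c ≠ ⊥}

end Frame

/-- The weight of a binary codeword. -/
def cwt {r : ℕ} (c : Fin r → ZMod 2) : ℕ :=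
  (Finset.univ.filter (fun i => c i = 1)).card

/-- A linear binary code. -/
def IsLinearCode {r : ℕ} (C : Set (Fin r → ZMod 2)) : Prop :=
  (0 ∈ C) ∧ ∀ a ∈ C, ∀ b ∈ C, a + b ∈ C

/-- An even linear binary code. -/
def IsEvenCode {r : ℕ} (C : Set (Fin r → ZMod 2)) : Prop :=
  IsLinearCode C ∧ ∀ c ∈ C, 2 ∣ cwt c

/-- The standard bilinear pairing on `ℤ₂^r`. -/
def cdot {r : ℕ} (a b : Fin r → ZMod 2) : ZMod 2 := ∑ i, a i * b i

/-- The dual code. -/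
def dualCode {r : ℕ} (C : Set (Fin r → ZMod 2)) : Set (Fin r → ZMod 2) :=
  {x | ∀ c ∈ C, cdot x c = 0}
noncomputable section
/-- The shift of the modes of the `i`-th fermion determined by the codeword
`d`: the modes of `a_i` lie in `ℤ + (d_i+1)/2`. -/
def modeShift {r : ℕ} (d : Fin r → ZMod 2) (i : Fin r) : ℚ :=
  if d i = 0 then 1/2 else 0

/-- The Koszul sign exponent of the generator `(i,k)` relative to the
monomial `S` (the number of generators of `S` preceding `(i,k)`). -/
def fsgn {r : ℕ} (S : Finset (Fin r × ℕ)) (p : Fin r × ℕ) : ℕ :=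
  (S.filter (fun q => q.2 * r + (q.1 : ℕ) < p.2 * r + (p.1 : ℕ))).card

/-- The (possibly twisted) fermionic Fock space `V(H_R, d)` over `R`: a free
`R`-module with a basis of monomials indexed by finite sets of creation
operators `a_i(-(k + (d_i+1)/2 - 1/2))` (encoded by pairs `(i,k)`), together
with the Clifford algebra action of the modes `a_i(n)`, `n ∈ ℤ + (d_i+1)/2`,
satisfying `a(m)b(n) + b(n)a(m) = (a,b)δ_{m+n,0}`.  The pair `(i,k)` encodes
the creation operator of mode `-(k + modeShift d i)`. -/
structure FockData (R : Type) [CommRing R] [Invertible (2 : R)]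
    (r : ℕ) (d : Fin r → ZMod 2)
    (V : Type) [AddCommGroup V] [Module R V] : Type where
  b : Module.Basis (Finset (Fin r × ℕ)) R V
  a : Fin r → ℚ → V → V
  a_add : ∀ i k u v, a i k (u + v) = a i k u + a i k v
  a_smul : ∀ i k (c : R) v, a i k (c • v) = c • a i k v
  a_supp : ∀ i (k : ℚ), (¬ ∃ m : ℤ, k = (m : ℚ) + modeShift d i) → ∀ v, a i k v = 0
  clifford : ∀ i j m n v, a i m (a j n v) + a j n (a i m v)
    = (if i = j ∧ m + n = 0 then v else 0)
  create : ∀ i (k : ℕ) S, (i, k) ∉ S →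
    a i (-((k : ℚ) + modeShift d i)) (b S)
      = (((-1 : ℤ) ^ fsgn S (i, k) : ℤ) : R) • b (insert (i, k) S)
  create_mem : ∀ i (k : ℕ) S, (i, k) ∈ S → (0 : ℚ) < (k : ℚ) + modeShift d i →
    a i (-((k : ℚ) + modeShift d i)) (b S) = 0
  ann : ∀ i (k : ℕ) S, (i, k) ∈ S → (0 : ℚ) < (k : ℚ) + modeShift d i →
    a i ((k : ℚ) + modeShift d i) (b S)
      = (((-1 : ℤ) ^ fsgn S (i, k) : ℤ) : R) • b (S.erase (i, k))
  ann_not : ∀ i (k : ℕ) S, (i, k) ∉ S → (0 : ℚ) < (k : ℚ) + modeShift d i →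
    a i ((k : ℚ) + modeShift d i) (b S) = 0
  zero_mem : ∀ i S, d i = 1 → (i, 0) ∈ S →
    a i 0 (b S)
      = ((⅟(2 : R)) * (((-1 : ℤ) ^ fsgn S (i, 0) : ℤ) : R)) • b (S.erase (i, 0))

namespace FockData

variable {R : Type} [CommRing R] [Invertible (2 : R)]
variable {r : ℕ} {d : Fin r → ZMod 2}
variable {V : Type} [AddCommGroup V] [Module R V]

/-- The vacuum vector of the Fock space. -/
def fvac (Fk : FockData R r d V) : V := Fk.b ∅

/-- The `i`-th frame Virasoro vector `ω_i = (1/2) a_i(-3/2) a_i(-1/2) 𝟏`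
of the (untwisted) Fock space. -/
def fomega (Fk : FockData R r d V) (i : Fin r) : V :=
  (⅟(2 : R)) • Fk.a i (-(3/2 : ℚ)) (Fk.a i (-(1/2 : ℚ)) Fk.fvac)

/-- The conformal vector of the Fock space. -/
def fconf (Fk : FockData R r d V) : V := ∑ i, Fk.fomega i

/-- The symmetric bilinear form on the Fock space for which the monomials are
orthogonal, a monomial containing exactly `k` zero-modes having square length
`1/2^k` (so in the untwisted case the monomials are orthonormal). -/
def form (Fk : FockData R r d V) (u v : V) : R :=
  (Fk.b.repr u).sum fun S c =>
    c * (Fk.b.repr v S) *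
      (⅟(2 : R)) ^ (S.filter (fun p => d p.1 = 1 ∧ p.2 = 0)).card

/-- The binary codeword recorded by a monomial: its parity in each
tensor factor. -/
def cwOf {r : ℕ} (S : Finset (Fin r × ℕ)) : Fin r → ZMod 2 :=
  fun i => ((S.filter (fun p => p.1 = i)).card : ZMod 2)

/-- The subspace of the Fock space spanned by the monomials whose codeword
lies in the given set of codewords (e.g. `M_{C}`, `M_{C+x}`,
`V(H,d,C+x)`, …). -/
def codeSpan (Fk : FockData R r d V) (Cs : Set (Fin r → ZMod 2)) :
    Submodule R V :=
  Submodule.span R {v | ∃ S, cwOf S ∈ Cs ∧ v = Fk.b S}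

end FockData

/-- The coset `C + x` of a binary code. -/
def cosetOf {r : ℕ} (C : Set (Fin r → ZMod 2)) (x : Fin r → ZMod 2) :
    Set (Fin r → ZMod 2) :=
  {y | ∃ c ∈ C, y = c + x}

end
/-- The subring `ℤ[1/2]` of a field `K`. -/
def Dhalf (K : Type) [Field K] : Subring K := Subring.closure {(2⁻¹ : K)}

/-- The `ℤ[1/2]`-form of a (twisted) Fock space over `ℂ`: the set of vectors
all of whose coordinates with respect to the monomial basis lie in
`ℤ[1/2]`. -/
def dyadicLattice {r : ℕ} {d : Fin r → ZMod 2}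
    {V : Type} [AddCommGroup V] [Module ℂ V]
    (Fk : FockData ℂ r d V) : Set V :=
  {v | ∀ S, Fk.b.repr v S ∈ Dhalf ℂ}

/-!
With `d = 0` no monomial contains a zero-mode, so the form is the standard dot product of
coordinates in the monomial basis, and `M_{C+x}` is the span of the monomials whose codeword
lies in `C + x`. A coordinate lattice is self-dual for the dot product on any coordinate
subspace: pairing `u` with a basis vector `b S` of the subspace reads off the coordinate `u_S`,
and the coordinates of `u` outside the subspace vanish.
-/

namespace Module.Basis

variable {ι R M : Type*} [CommRing R] [AddCommGroup M] [Module R M]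

theorem repr_sum_mul_repr_self (b : Basis ι R M) (u : M) (i : ι) :
    ((b.repr u).sum fun j c => c * b.repr (b i) j) = b.repr u i := by
  classical
  simp only [repr_self, Finsupp.single_apply, mul_ite, mul_one, mul_zero]
  exact Finsupp.sum_ite_self_eq _ _

theorem coordLattice_inter_span_selfDual (b : Basis ι R M) (D : Subring R) (T : Set ι) :
    {u | u ∈ Submodule.span R (b '' T) ∧
        ∀ w ∈ {v | ∀ i, b.repr v i ∈ D} ∩ (Submodule.span R (b '' T) : Set M),
          ((b.repr u).sum fun i c => c * b.repr w i) ∈ D}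
      = {v | ∀ i, b.repr v i ∈ D} ∩ (Submodule.span R (b '' T) : Set M) := by
  classical
  ext u
  simp only [Set.mem_ofPred_eq, Set.mem_inter_iff, SetLike.mem_coe]
  constructor
  · rintro ⟨hu, hpair⟩
    refine ⟨fun i => ?_, hu⟩
    by_cases hi : i ∈ T
    · have hbi : b i ∈ Submodule.span R (b '' T) := Submodule.subset_span ⟨i, hi, rfl⟩
      have hbi_lattice : ∀ j, b.repr (b i) j ∈ D := fun j => by
        rw [repr_self, Finsupp.single_apply]
        split_ifs
        exacts [one_mem D, zero_mem D]
      simpa only [repr_sum_mul_repr_self] using hpair (b i) ⟨hbi_lattice, hbi⟩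
    · have hsupp : i ∉ (b.repr u).support := fun h => hi (b.mem_span_image.mp hu h)
      rw [Finsupp.notMem_support_iff.mp hsupp]
      exact zero_mem D
  · rintro ⟨hu_lattice, hu⟩
    refine ⟨hu, fun w ⟨hw_lattice, _⟩ => ?_⟩
    exact sum_mem fun i _ => mul_mem (hu_lattice i) (hw_lattice i)

end Module.Basis

namespace FockData

variable {R : Type} [CommRing R] [Invertible (2 : R)] {r : ℕ} {d : Fin r → ZMod 2}
  {V : Type} [AddCommGroup V] [Module R V]

theorem form_eq_sum_mul_repr (Fk : FockData R r 0 V) (u v : V) :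
    Fk.form u v = (Fk.b.repr u).sum fun S c => c * Fk.b.repr v S := by
  refine Finsupp.sum_congr fun S _ => ?_
  have hno_zero_modes : S.filter (fun p => (0 : Fin r → ZMod 2) p.1 = 1 ∧ p.2 = 0) = ∅ :=
    Finset.filter_false_of_mem fun p _ h => zero_ne_one h.1
  rw [hno_zero_modes, Finset.card_empty, pow_zero, mul_one]

theorem codeSpan_eq_span_image (Fk : FockData R r d V) (Cs : Set (Fin r → ZMod 2)) :
    Fk.codeSpan Cs = Submodule.span R (Fk.b '' {S | cwOf S ∈ Cs}) := by
  unfold codeSpan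
  congr 1
  ext v
  exact ⟨fun ⟨S, hS, hv⟩ => ⟨S, hS, hv.symm⟩, fun ⟨S, hS, hv⟩ => ⟨S, hS, hv.symm⟩⟩

end FockData

theorem code_module_lattice_selfdual_general
    (r : ℕ) (C : Set (Fin r → ZMod 2))
    (x : Fin r → ZMod 2)
    (V : Type) [AddCommGroup V] [Module ℂ V]
    (Fk : FockData ℂ r 0 V) :
    {u : V | u ∈ Fk.codeSpan (cosetOf C x) ∧
        ∀ w ∈ dyadicLattice Fk ∩ (Fk.codeSpan (cosetOf C x) : Set V),
          Fk.form u w ∈ Dhalf ℂ}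
      = dyadicLattice Fk ∩ (Fk.codeSpan (cosetOf C x) : Set V) := by
  simp only [FockData.form_eq_sum_mul_repr, FockData.codeSpan_eq_span_image]
  exact Fk.b.coordLattice_inter_span_selfDual (Dhalf ℂ) _

/-- **Statement 15.**  Let `D = ℤ[1/2]`, `C ⊆ ℤ₂^r` an even binary linear
code and `x ∈ ℤ₂^r`.  The `D`-form `(M_{C+x})_D = M_{C+x} ∩ V(H_D)` of the
`M_C`-module `M_{C+x}` is self-dual under the bilinear form:
`{u ∈ M_{C+x} : (u, (M_{C+x})_D) ⊆ D} = (M_{C+x})_D`. -/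
theorem code_module_lattice_selfdual
    (r : ℕ) (C : Set (Fin r → ZMod 2)) (hC : IsEvenCode C)
    (x : Fin r → ZMod 2)
    (V : Type) [AddCommGroup V] [Module ℂ V]
    (Fk : FockData ℂ r 0 V) :
    {u : V | u ∈ Fk.codeSpan (cosetOf C x) ∧
        ∀ w ∈ dyadicLattice Fk ∩ (Fk.codeSpan (cosetOf C x) : Set V),
          Fk.form u w ∈ Dhalf ℂ}
      = dyadicLattice Fk ∩ (Fk.codeSpan (cosetOf C x) : Set V) :=
  code_module_lattice_selfdual_general r C x V Fk
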